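/- For every positive integer n and every even positive integer d, the automaton S_{n,d} rejects all words in LimsupOdd_{n,d}: for every infinite word w over Σ_{n,d} in which the largest priority occurring infinitely often is odd, every run of S_{n,d} reading w eventually reaches the rejecting state rej. -/

import Mathlib

namespace PGSep

/-- Letters of the alphabet `Σ_{n,d}`: triples (source node, priority, target node). -/
abbrev Letter : Type := ℕ × ℕ × ℕ

/-- The priority component of a letter. -/
def prio (e : Letter) : ℕ := e.2.1

/-- Membership in the alphabet `Σ_{n,d} = {1,…,n} × {1,…,d} × {1,…,n}`. -/
def InAlph (n d : ℕ) (e : Letter) : Prop :=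
  1 ≤ e.1 ∧ e.1 ≤ n ∧ 1 ≤ e.2.1 ∧ e.2.1 ≤ d ∧ 1 ≤ e.2.2 ∧ e.2.2 ≤ n

/-- Infinite words over the alphabet. -/
abbrev Word : Type := ℕ → Letter

/-- `p` occurs infinitely often among the values of `f`. -/
def InfOft (f : ℕ → ℕ) (p : ℕ) : Prop := ∀ N, ∃ k, N ≤ k ∧ f k = p

/-- The largest value occurring infinitely often in `f` exists and is even. -/
def MaxInfOftEven (f : ℕ → ℕ) : Prop :=
  ∃ p, Even p ∧ InfOft f p ∧ ∀ q, InfOft f q → q ≤ p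

/-- The largest value occurring infinitely often in `f` exists and is odd. -/
def MaxInfOftOdd (f : ℕ → ℕ) : Prop :=
  ∃ p, Odd p ∧ InfOft f p ∧ ∀ q, InfOft f q → q ≤ p

/-- `LimsupEven_{n,d}`: the largest priority occurring infinitely often is even. -/
def LimsupEven (w : Word) : Prop := MaxInfOftEven fun k => prio (w k)

/-- `LimsupOdd_{n,d}`: the largest priority occurring infinitely often is odd. -/
def LimsupOdd (w : Word) : Prop := MaxInfOftOdd fun k => prio (w k)

/-- An infinite sequence of triples is a path in the edge set `E`. -/
def IsPathSeq {V : Type*} (E : Set (V × ℕ × V)) (w : ℕ → V × ℕ × V) : Prop :=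
  ∀ k, w k ∈ E ∧ (w k).2.2 = (w (k + 1)).1

/-- A game graph with `n` nodes (the set {1,…,n}) and priorities up to `d`. -/
structure GameGraph (n d : ℕ) where
  /-- nodes owned by Even (V_□) -/
  evenN : Set ℕ
  /-- nodes owned by Odd (V_△) -/
  oddN : Set ℕ
  /-- the starting node -/
  start : ℕ
  /-- the set of edges (a subset of the alphabet) -/
  edges : Set Letter
  union_eq : evenN ∪ oddN = Set.Icc 1 n
  disj : Disjoint evenN oddN
  start_mem : start ∈ Set.Icc 1 n
  edges_alph : ∀ e ∈ edges, InAlph n d e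
  total : ∀ v ∈ Set.Icc (1 : ℕ) n, ∃ e ∈ edges, e.1 = v

/-- A play in a game graph: an infinite path starting at the starting node,
identified with the word listing its consecutive edges. -/
def IsPlay {n d : ℕ} (G : GameGraph n d) (w : Word) : Prop :=
  (w 0).1 = G.start ∧ IsPathSeq G.edges w

/-- A positional strategy for Even: one outgoing edge for each node of `V_□`. -/
structure EPosStrat {n d : ℕ} (G : GameGraph n d) where
  choice : ℕ → Letter
  mem : ∀ v ∈ G.evenN, choice v ∈ G.edges ∧ (choice v).1 = v

/-- A positional strategy for Odd: one outgoing edge for each node of `V_△`. -/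
structure OPosStrat {n d : ℕ} (G : GameGraph n d) where
  choice : ℕ → Letter
  mem : ∀ v ∈ G.oddN, choice v ∈ G.edges ∧ (choice v).1 = v

/-- A play arises from a positional strategy of Even. -/
def ArisesE {n d : ℕ} {G : GameGraph n d} (τ : EPosStrat G) (w : Word) : Prop :=
  IsPlay G w ∧ ∀ k, (w k).1 ∈ G.evenN → w k = τ.choice (w k).1

/-- A play arises from a positional strategy of Odd. -/
def ArisesO {n d : ℕ} {G : GameGraph n d} (τ : OPosStrat G) (w : Word) : Prop :=
  IsPlay G w ∧ ∀ k, (w k).1 ∈ G.oddN → w k = τ.choice (w k).1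

/-- A positional strategy for Even is winning: every arising play is won by Even. -/
def EWinningPos {n d : ℕ} {G : GameGraph n d} (τ : EPosStrat G) : Prop :=
  ∀ w, ArisesE τ w → LimsupEven w

/-- A positional strategy for Odd is winning: every arising play is won by Odd
(i.e. not won by Even). -/
def OWinningPos {n d : ℕ} {G : GameGraph n d} (τ : OPosStrat G) : Prop :=
  ∀ w, ArisesO τ w → ¬ LimsupEven w

/-- `PosEven_{n,d}`: plays arising from positional winning strategies for Even. -/
def PosEven (n d : ℕ) : Set Word :=
  {w | ∃ G : GameGraph n d, ∃ τ : EPosStrat G, EWinningPos τ ∧ ArisesE τ w}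

/-- `PosOdd_{n,d}`: plays arising from positional winning strategies for Odd. -/
def PosOdd (n d : ℕ) : Set Word :=
  {w | ∃ G : GameGraph n d, ∃ τ : OPosStrat G, OWinningPos τ ∧ ArisesO τ w}

/-- A nondeterministic automaton reading letters, with state space `Q`. -/
structure Automaton (Q : Type*) where
  init : Q
  trans : Set (Q × Letter × ℕ × Q)

/-- Transitions: (source state, letter, emitted priority, target state). -/
abbrev Trans (Q : Type*) : Type _ := Q × Letter × ℕ × Q

def tSrc {Q : Type*} (t : Trans Q) : Q := t.1
def tLetter {Q : Type*} (t : Trans Q) : Letter := t.2.1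
def tPrio {Q : Type*} (t : Trans Q) : ℕ := t.2.2.1
def tTgt {Q : Type*} (t : Trans Q) : Q := t.2.2.2

/-- `A` is a (total) nondeterministic parity automaton over `Σ_{n,d}` with
transition priorities in `{1,…,d'}`. -/
def IsParityAutomaton (n d d' : ℕ) {Q : Type*} (A : Automaton Q) : Prop :=
  (∀ t ∈ A.trans, InAlph n d (tLetter t) ∧ 1 ≤ tPrio t ∧ tPrio t ≤ d') ∧
  (∀ (s : Q) (e : Letter), InAlph n d e → ∃ p s', (s, e, p, s') ∈ A.trans)

/-- A run of the automaton: an infinite path of transitions starting at `init`. -/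
def IsRun {Q : Type*} (A : Automaton Q) (ρ : ℕ → Trans Q) : Prop :=
  tSrc (ρ 0) = A.init ∧ ∀ k, ρ k ∈ A.trans ∧ tTgt (ρ k) = tSrc (ρ (k + 1))

/-- The run `ρ` reads the word `w`. -/
def Reads {Q : Type*} (ρ : ℕ → Trans Q) (w : Word) : Prop := ∀ k, tLetter (ρ k) = w k

/-- A run is accepting: the largest priority labelling infinitely many
of its transitions is even. -/
def Accepting {Q : Type*} (ρ : ℕ → Trans Q) : Prop := MaxInfOftEven fun k => tPrio (ρ k)

/-- The language of the automaton. -/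
def Lang {Q : Type*} (A : Automaton Q) : Set Word :=
  {w | ∃ ρ, IsRun A ρ ∧ Reads ρ w ∧ Accepting ρ}

/-- A transition strategy for `A`, resolving nondeterminism based on the word read
so far, the current state, and the next letter. -/
structure TransStrat (n d : ℕ) {Q : Type*} (A : Automaton Q) where
  app : List Letter → Q → Letter → Trans Q
  valid : ∀ w s e, InAlph n d e →
    app w s e ∈ A.trans ∧ tSrc (app w s e) = s ∧ tLetter (app w s e) = e

/-- The state reached after reading the first `k` letters of `w` following `σ`. -/
def stateAt {n d : ℕ} {Q : Type*} (A : Automaton Q) (σ : TransStrat n d A) (w : Word) :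
    ℕ → Q
  | 0 => A.init
  | k + 1 => tTgt (σ.app ((List.range k).map w) (stateAt A σ w k) (w k))

/-- The run obtained by following the transition strategy `σ` while reading `w`. -/
def followRun {n d : ℕ} {Q : Type*} (A : Automaton Q) (σ : TransStrat n d A) (w : Word)
    (k : ℕ) : Trans Q :=
  σ.app ((List.range k).map w) (stateAt A σ w k) (w k)

/-- The transition strategy `σ` is winning for the set of words `L`. -/
def WinningFor {n d : ℕ} {Q : Type*} (A : Automaton Q) (σ : TransStrat n d A)
    (L : Set Word) : Prop :=
  ∀ w ∈ L, Accepting (followRun A σ w)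

/-- `A` is good for games: some transition strategy is winning for the whole `L(A)`. -/
def GFG (n d : ℕ) {Q : Type*} (A : Automaton Q) : Prop :=
  ∃ σ : TransStrat n d A, WinningFor A σ (Lang A)

/-- `A` is a parity-games separator. -/
def PGSeparator (n d : ℕ) {Q : Type*} (A : Automaton Q) : Prop :=
  (∀ w ∈ PosEven n d, w ∈ Lang A) ∧ ∀ w ∈ PosOdd n d, w ∉ Lang A

/-- `A` is a strong PG separator: additionally it rejects all of `LimsupOdd`. -/
def StrongPGSeparator (n d : ℕ) {Q : Type*} (A : Automaton Q) : Prop :=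
  PGSeparator n d A ∧ ∀ w : Word, LimsupOdd w → w ∉ Lang A

/-- `A` is suitable for parity games (SFPG). -/
def SFPG (n d : ℕ) {Q : Type*} (A : Automaton Q) : Prop :=
  PGSeparator n d A ∧
  ∀ (G : GameGraph n d) (τ : EPosStrat G), EWinningPos τ →
    ∃ σ : TransStrat n d A, WinningFor A σ {w | ArisesE τ w}

/-- A generic game with parity winning condition, over an arbitrary set of nodes. -/
structure PGame (V : Type*) where
  evenOwn : V → Prop
  start : V
  edges : Set (V × ℕ × V)

/-- A play of a generic game. -/
def PGame.IsPlay {V : Type*} (g : PGame V) (w : ℕ → V × ℕ × V) : Prop :=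
  (w 0).1 = g.start ∧ IsPathSeq g.edges w

/-- `IsFinPath E u l v`: the list of edges `l` is a finite path from `u` to `v`. -/
def IsFinPath {V : Type*} (E : Set (V × ℕ × V)) : V → List (V × ℕ × V) → V → Prop
  | u, [], v => u = v
  | u, e :: l, v => e ∈ E ∧ e.1 = u ∧ IsFinPath E e.2.2 l v

/-- Even has a winning strategy in the game `g`. -/
def EvenWins {V : Type*} (g : PGame V) : Prop :=
  ∃ str : List (V × ℕ × V) → V × ℕ × V,
    (∀ l v, IsFinPath g.edges g.start l v → g.evenOwn v →
      str l ∈ g.edges ∧ (str l).1 = v) ∧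
    ∀ w, g.IsPlay w → (∀ k, g.evenOwn ((w k).1) → w k = str ((List.range k).map w)) →
      MaxInfOftEven fun k => (w k).2.1

/-- Odd has a winning strategy in the game `g`. -/
def OddWins {V : Type*} (g : PGame V) : Prop :=
  ∃ str : List (V × ℕ × V) → V × ℕ × V,
    (∀ l v, IsFinPath g.edges g.start l v → ¬ g.evenOwn v →
      str l ∈ g.edges ∧ (str l).1 = v) ∧
    ∀ w, g.IsPlay w → (∀ k, ¬ g.evenOwn ((w k).1) → w k = str ((List.range k).map w)) →
      ¬ MaxInfOftEven fun k => (w k).2.1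

/-- Even has a strategy winning for the safety condition `safe` in the game `g`. -/
def EvenWinsSafety {V : Type*} (g : PGame V) (safe : V → Prop) : Prop :=
  ∃ str : List (V × ℕ × V) → V × ℕ × V,
    (∀ l v, IsFinPath g.edges g.start l v → g.evenOwn v →
      str l ∈ g.edges ∧ (str l).1 = v) ∧
    ∀ w, g.IsPlay w → (∀ k, g.evenOwn ((w k).1) → w k = str ((List.range k).map w)) →
      ∀ k, safe (w k).2.2

/-- A game graph viewed as a generic game. -/
def GameGraph.toPGame {n d : ℕ} (G : GameGraph n d) : PGame ℕ :=
  { evenOwn := fun v => v ∈ G.evenN, start := G.start, edges := G.edges }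

/-- The synchronized product `G × A`. -/
def prodGame {n d : ℕ} {Q : Type*} (G : GameGraph n d) (A : Automaton Q) :
    PGame ((ℕ ⊕ Letter) × Q) where
  evenOwn := fun x => match x.1 with
    | Sum.inl v => v ∈ G.evenN
    | Sum.inr _ => True
  start := (Sum.inl G.start, A.init)
  edges := {ed | (∃ e ∈ G.edges, ∃ s : Q, ed = ((Sum.inl e.1, s), 1, (Sum.inr e, s))) ∨
    (∃ t ∈ A.trans, tLetter t ∈ G.edges ∧
      ed = ((Sum.inr (tLetter t), tSrc t), tPrio t, (Sum.inl (tLetter t).2.2, tTgt t)))}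

/-- The number of registers: `rn(n) = 1 + ⌊log₂ n⌋`. -/
def rn (n : ℕ) : ℕ := 1 + Nat.log 2 n

/-- Update of a register state (bottom register first) by priority `p`:
the maximal prefix of registers smaller than `p` is replaced by `p`. -/
def update (p : ℕ) : List ℕ → List ℕ
  | [] => []
  | r :: l => if r < p then p :: update p l else r :: l

/-- The `k`-reset (registers numbered from 1, bottom first): the `k`-th register is
removed and a `1` is inserted at the bottom. -/
def resetReg (k : ℕ) (l : List ℕ) : List ℕ := 1 :: l.eraseIdx (k - 1)

/-- The value of register number `k` (registers numbered from 1, bottom first). -/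
def regVal (k : ℕ) (l : List ℕ) : ℕ := l.getD (k - 1) 0

/-- Lehtinen's register automaton `R_{n,d}`. -/
def Raut (n d : ℕ) : Automaton (List ℕ) where
  init := List.replicate (rn n) 1
  trans := {t | ∃ s e, InAlph n d e ∧
    (t = (s, e, 1, update (prio e) s) ∨
     ∃ k, 1 ≤ k ∧ k ≤ rn n ∧
       ((Even (regVal k (update (prio e) s)) ∧
           t = (s, e, 2 * k, resetReg k (update (prio e) s))) ∨
        (Odd (regVal k (update (prio e) s)) ∧
           t = (s, e, 2 * k + 1, resetReg k (update (prio e) s)))))}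

/-- States of the safety automaton `S_{n,d}`: `none` is the rejecting state `rej`;
otherwise a state of `R_{n,d}` together with a tuple of counters (bottom first:
`c_0` is the head). -/
abbrev SState : Type := Option (List ℕ × List ℕ)

/-- Counters `c_0,…,c_{k-1}` are reset to `c0`; the rest is kept. -/
def bumpKeep (c0 k : ℕ) (c : List ℕ) : List ℕ := List.replicate k c0 ++ c.drop k

/-- Counters `c_0,…,c_{k-1}` are reset to `c0`; counter `c_k` is decremented. -/
def bumpDec (c0 k : ℕ) (c : List ℕ) : List ℕ :=
  List.replicate k c0 ++ ((c.getD k 0 - 1) :: c.drop (k + 1))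

/-- The safety automaton `S_{n,d}`. -/
def Saut (n d : ℕ) : Automaton SState where
  init := some (List.replicate (rn n) 1, List.replicate (rn n + 1) n)
  trans := {t |
    (∃ e, InAlph n d e ∧ t = (none, e, 1, none)) ∨
    (∃ s c e k s', 1 ≤ k ∧ (s, e, 2 * k, s') ∈ (Raut n d).trans ∧
       t = (some (s, c), e, 2, some (s', bumpKeep n k c))) ∨
    (∃ s c e k s', (s, e, 2 * k + 1, s') ∈ (Raut n d).trans ∧
       ((1 < c.getD k 0 ∧ t = (some (s, c), e, 2, some (s', bumpDec n k c))) ∨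
        (c.getD k 0 = 1 ∧ t = (some (s, c), e, 1, none))))}

/-- `bad(ρ) ≤ B` for an infinite run `ρ`: every infix containing no transition of
priority above an odd `p` contains at most `B` transitions of priority `p`. -/
def badLE {Q : Type*} (ρ : ℕ → Trans Q) (B : ℕ) : Prop :=
  ∀ a b p, Odd p → (∀ i, a ≤ i → i < b → tPrio (ρ i) ≤ p) →
    ((Finset.Ico a b).filter fun i => tPrio (ρ i) = p).card ≤ B

/-- `bad(ρ) ≤ B` for a partial run of length `L` (possibly infinite). -/
def badLEPartial {Q : Type*} (ρ : ℕ → Trans Q) (L : ℕ∞) (B : ℕ) : Prop :=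
  ∀ (a b p : ℕ), Odd p → (b : ℕ∞) ≤ L → (∀ i, a ≤ i → i < b → tPrio (ρ i) ≤ p) →
    ((Finset.Ico a b).filter fun i => tPrio (ρ i) = p).card ≤ B

/-- The strategy subgraph `G_τ`: all outgoing edges of Odd's nodes, and only the
chosen edge from each of Even's nodes. -/
def GtauEdges {n d : ℕ} (G : GameGraph n d) (τ : EPosStrat G) : Set Letter :=
  {e | e ∈ G.edges ∧ (e.1 ∈ G.evenN → e = τ.choice e.1)}

/-- One step along an edge of `E`. -/
def StepRel (E : Set Letter) (u v : ℕ) : Prop := ∃ p, (u, p, v) ∈ E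

/-- Reachability along edges of `E`. -/
def Reach (E : Set Letter) : ℕ → ℕ → Prop := Relation.ReflTransGen (StepRel E)

/-- `V_τ`: the nodes of `G_τ` reachable from the starting node. -/
def Vtau {n d : ℕ} (G : GameGraph n d) (τ : EPosStrat G) : Set ℕ :=
  {v | Reach (GtauEdges G τ) G.start v}

/-- `G_{S,p}`: edges of `E` inside `S` of priority at most `p`. -/
def subEdges (E : Set Letter) (S : Set ℕ) (p : ℕ) : Set Letter :=
  {e | e ∈ E ∧ e.1 ∈ S ∧ e.2.2 ∈ S ∧ prio e ≤ p}

/-- `parts` lists the strongly connected components of the graph `(S, E)` in a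
topological order. -/
def IsSCCDecomp (E : Set Letter) (S : Set ℕ) (parts : List (Set ℕ)) : Prop :=
  (∀ P ∈ parts, P.Nonempty ∧ P ⊆ S) ∧
  (∀ v ∈ S, ∃ P ∈ parts, v ∈ P) ∧
  List.Pairwise Disjoint parts ∧
  (∀ P ∈ parts, ∀ u ∈ P, ∀ v ∈ S, ((Reach E u v ∧ Reach E v u) ↔ v ∈ P)) ∧
  (∀ (i j : ℕ) (hi : i < parts.length) (hj : j < parts.length), i < j →
    ∀ u ∈ parts.get ⟨j, hj⟩, ∀ v ∈ parts.get ⟨i, hi⟩, ¬ StepRel E u v)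

/-- The nodes of a tree given by the children function `ch` with root `(r, R)`. -/
inductive TreeNode (ch : ℕ → Set ℕ → List (Set ℕ)) (r : ℕ) (R : Set ℕ) :
    ℕ → Set ℕ → Prop where
  | root : TreeNode ch r R r R
  | child {k : ℕ} {S T : Set ℕ} : TreeNode ch r R (k + 1) S → T ∈ ch (k + 1) S →
      TreeNode ch r R k T

/-- `ch` describes a game tree of `G_τ`: the root is `(⌈d/2⌉, V_τ)`, and the children
of a node `(k+1, S)` are the SCCs of `G_{S,2(k+1)-1}` in topological order. -/
def IsGameTree {n d : ℕ} (G : GameGraph n d) (τ : EPosStrat G)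
    (ch : ℕ → Set ℕ → List (Set ℕ)) : Prop :=
  ∀ k S, TreeNode ch ((d + 1) / 2) (Vtau G τ) (k + 1) S →
    IsSCCDecomp (subEdges (GtauEdges G τ) S (2 * (k + 1) - 1)) S (ch (k + 1) S)

/-- `fstl ch l k S`: the leftmost descendant of the node `(k, S)` on level `l`
(for `l ≤ k`). -/
def fstl (ch : ℕ → Set ℕ → List (Set ℕ)) (l : ℕ) : ℕ → Set ℕ → Set ℕ
  | 0, S => S
  | k + 1, S => if l = k + 1 then S else fstl ch l k ((ch (k + 1) S).headD ∅)


/-!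
If a run of `S_{n,d}` never reaches `rej`, its states carry a run of `R_{n,d}` on the same word
together with counters. Counter `c_j` is decremented at each priority `2j+1` of that run and is
reset only by higher priorities, so the largest priority the run of `R_{n,d}` sees infinitely
often is even, say `2k`. On a word whose top recurring priority `p` is odd this is impossible:
once no priority above `p` is read, the number of registers holding values above `p` never grows,
and it drops at the first even reset of register `k` after each occurrence of `p`, because
register `k` has absorbed `p` and is even.
-/

open Filter

section Recurrence

variable {f : ℕ → ℕ} {B p : ℕ}

theorem infOft_iff_frequently : InfOft f p ↔ ∃ᶠ k in atTop, f k = p :=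
  frequently_atTop.symm

theorem eventually_infOft_apply (hf : ∀ k, f k ≤ B) : ∀ᶠ k in atTop, InfOft f (f k) := by
  have hval : ∀ v ∈ Finset.range (B + 1), ∀ᶠ k in atTop, f k = v → InfOft f v := by
    intro v _
    by_cases hv : InfOft f v
    · exact Eventually.of_forall fun _ _ => hv
    · rw [infOft_iff_frequently, not_frequently] at hv
      exact hv.mono fun k hk hkv => absurd hkv hk
  filter_upwards [(eventually_all_finset _).2 hval] with k hk
  exact hk (f k) (Finset.mem_range.2 (Nat.lt_succ_of_le (hf k))) rfl

theorem eventually_le_of_forall_infOft_le (hf : ∀ k, f k ≤ B)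
    (hmax : ∀ q, InfOft f q → q ≤ p) : ∀ᶠ k in atTop, f k ≤ p :=
  (eventually_infOft_apply hf).mono fun _ hk => hmax _ hk

theorem exists_max_infOft (hf : ∀ k, f k ≤ B) :
    ∃ p, InfOft f p ∧ ∀ q, InfOft f q → q ≤ p := by
  have hne : {v | InfOft f v}.Nonempty :=
    let ⟨k, hk⟩ := (eventually_infOft_apply hf).exists
    ⟨f k, hk⟩
  have hbdd : BddAbove {v | InfOft f v} := ⟨B, fun v hv => by
    obtain ⟨k, -, rfl⟩ := hv 0
    exact hf k⟩
  exact ⟨sSup _, Nat.sSup_mem hne hbdd, fun q hq => le_csSup hbdd hq⟩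

theorem not_frequently_lt_of_eventually_le {g : ℕ → ℕ}
    (hle : ∀ᶠ t in atTop, g (t + 1) ≤ g t) : ¬ ∃ᶠ t in atTop, g (t + 1) < g t := by
  intro hlt
  obtain ⟨N, hN⟩ := eventually_atTop.1 hle
  have hanti : Antitone fun i => g (N + i) :=
    antitone_nat_of_succ_le fun i => hN _ (Nat.le_add_right N i)
  suffices ∀ v i, g (N + i) ≠ v from this _ 0 rfl
  intro v
  induction v using Nat.strong_induction_on with
  | _ v ih =>
    intro i hi
    obtain ⟨t, ht, hgt⟩ := frequently_atTop.1 hlt (N + i)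
    refine ih _ ?_ (t + 1 - N) (by rw [show N + (t + 1 - N) = t + 1 by omega])
    calc g (t + 1) < g t := hgt
      _ = g (N + (t - N)) := by rw [show N + (t - N) = t by omega]
      _ ≤ g (N + i) := hanti (by omega)
      _ = v := hi

end Recurrence

section Counters

/-- The counter part of a non-rejecting transition of `S_{n,d}` over a transition of
`R_{n,d}` of priority `p`. -/
def CounterStep (r p : ℕ) (c c' : List ℕ) : Prop :=
  (∃ k, p = 2 * k ∧ c' = bumpKeep r k c) ∨
    ∃ k, p = 2 * k + 1 ∧ 1 < c.getD k 0 ∧ c' = bumpDec r k c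

variable {r k j : ℕ} {c c' : List ℕ}

theorem getD_bumpKeep (h : k ≤ j) : (bumpKeep r k c).getD j 0 = c.getD j 0 := by
  rw [bumpKeep, List.getD_append_right _ _ _ _ (by simpa using h)]
  simp [List.getD_eq_getElem?_getD, Nat.add_sub_cancel' h]

theorem getD_bumpDec_of_lt (h : k < j) : (bumpDec r k c).getD j 0 = c.getD j 0 := by
  rw [bumpDec, List.getD_append_right _ _ _ _ (by simpa using h.le), List.length_replicate,
    show j - k = j - k - 1 + 1 by omega, List.getD_cons_succ]
  simp [List.getD_eq_getElem?_getD, show k + 1 + (j - k - 1) = j by omega]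

theorem getD_bumpDec_self : (bumpDec r k c).getD k 0 = c.getD k 0 - 1 := by
  rw [bumpDec, List.getD_append_right _ _ _ _ (by simp), List.length_replicate, Nat.sub_self,
    List.getD_cons_zero]

theorem CounterStep.getD_le {p : ℕ} (h : CounterStep r p c c') (hp : p ≤ 2 * j + 1) :
    c'.getD j 0 ≤ c.getD j 0 := by
  rcases h with ⟨k, rfl, rfl⟩ | ⟨k, rfl, -, rfl⟩
  · exact (getD_bumpKeep (by omega)).le
  · rcases (show k < j ∨ k = j by omega) with hkj | rfl
    · exact (getD_bumpDec_of_lt hkj).le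
    · exact getD_bumpDec_self.trans_le (Nat.sub_le _ _)

theorem CounterStep.getD_lt (h : CounterStep r (2 * j + 1) c c') : c'.getD j 0 < c.getD j 0 := by
  rcases h with ⟨k, hk, -⟩ | ⟨k, hk, hc, rfl⟩
  · omega
  · obtain rfl : k = j := by omega
    rw [getD_bumpDec_self]
    omega

theorem maxInfOftEven_of_counterStep {f : ℕ → ℕ} {B : ℕ} {c : ℕ → List ℕ}
    (hf : ∀ k, f k ≤ B) (hc : ∀ k, CounterStep r (f k) (c k) (c (k + 1))) : MaxInfOftEven f := by
  obtain ⟨Q, hQ, hmax⟩ := exists_max_infOft hf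
  refine ⟨Q, ?_, hQ, hmax⟩
  rcases Nat.even_or_odd Q with hev | ⟨j, rfl⟩
  · exact hev
  refine (not_frequently_lt_of_eventually_le (g := fun k => (c k).getD j 0) ?_ ?_).elim
  · filter_upwards [eventually_le_of_forall_infOft_le hf hmax] with k hk
    exact (hc k).getD_le hk
  · exact (infOft_iff_frequently.1 hQ).mono fun k hk => (hk ▸ hc k).getD_lt

end Counters

section Registers

/-- Prepending `1` also records that every register is at least `1`. -/
def IsRegState (n : ℕ) (s : List ℕ) : Prop :=
  s.length = rn n ∧ (1 :: s).Pairwise (· ≤ ·)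

variable {n d k p : ℕ} {s l : List ℕ}

theorem isRegState_init : IsRegState n (Raut n d).init :=
  ⟨List.length_replicate, by simp [Raut, List.pairwise_replicate]⟩

theorem update_eq_map (p : ℕ) (h : l.Pairwise (· ≤ ·)) : update p l = l.map (max · p) := by
  induction l with
  | nil => rfl
  | cons r l ih =>
    rw [List.pairwise_cons] at h
    by_cases hr : r < p
    · simp [update, hr, ih h.2, max_eq_right hr.le]
    · have hge : ∀ x ∈ r :: l, max x p = x := fun x hx =>
        max_eq_left ((not_lt.1 hr).trans (List.forall_mem_cons.2 ⟨le_rfl, h.1⟩ x hx))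
      rw [update, if_neg hr, List.map_congr_left hge, List.map_id']

theorem isRegState_update (hs : IsRegState n s) (p : ℕ) : IsRegState n (update p s) := by
  obtain ⟨hlen, hsort⟩ := hs
  rw [List.pairwise_cons] at hsort
  rw [update_eq_map p hsort.2]
  refine ⟨by simpa using hlen, List.pairwise_cons.2 ⟨?_, hsort.2.map _ fun a b hab => ?_⟩⟩
  · simpa using fun x hx => Or.inl (hsort.1 x hx)
  · exact max_le_max_right p hab

theorem isRegState_resetReg (hs : IsRegState n s) (hk1 : 1 ≤ k) (hk : k ≤ rn n) :
    IsRegState n (resetReg k s) := by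
  obtain ⟨hlen, hsort⟩ := hs
  have hsub : (1 :: s.eraseIdx (k - 1)).Pairwise (· ≤ ·) :=
    hsort.sublist ((List.eraseIdx_sublist s _).cons_cons 1)
  refine ⟨?_, List.pairwise_cons.2 ⟨?_, hsub⟩⟩
  · rw [resetReg, List.length_cons, List.length_eraseIdx_of_lt (by omega)]
    omega
  · exact List.forall_mem_cons.2 ⟨le_rfl, (List.pairwise_cons.1 hsub).1⟩

theorem IsRegState.regVal_update (hs : IsRegState n s) (hk1 : 1 ≤ k) (hk : k ≤ rn n) :
    regVal k (update p s) = max (regVal k s) p := by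
  have hlt : k - 1 < s.length := by rw [hs.1]; omega
  rw [update_eq_map p (List.pairwise_cons.1 hs.2).2, regVal, regVal,
    List.getD_eq_getElem _ _ (by simpa using hlt), List.getD_eq_getElem _ _ hlt, List.getElem_map]

theorem regVal_resetReg_of_lt {j : ℕ} (hj : 1 ≤ j) (hjk : j < k) :
    regVal k (resetReg j l) = regVal k l := by
  rw [regVal, regVal, resetReg, show k - 1 = k - 2 + 1 by omega, List.getD_cons_succ,
    List.getD_eq_getElem?_getD, List.getElem?_eraseIdx_of_ge (by omega),
    ← List.getD_eq_getElem?_getD]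

theorem countP_resetReg (hk1 : 1 ≤ k) (hk : k ≤ l.length) (hp : 1 ≤ p) :
    (resetReg k l).countP (p < ·) + (if p < regVal k l then 1 else 0) = l.countP (p < ·) := by
  have hlt : k - 1 < l.length := by omega
  rw [← (List.getElem_cons_eraseIdx_perm hlt).countP_eq, resetReg, List.countP_cons,
    List.countP_cons, regVal, List.getD_eq_getElem _ _ hlt]
  simp [Nat.not_lt.2 hp]

theorem countP_update {q : ℕ} (hq : q ≤ p) (l : List ℕ) :
    (update q l).countP (p < ·) = l.countP (p < ·) := by
  induction l with
  | nil => rfl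
  | cons r l ih =>
    by_cases hr : r < q
    · simp [update, hr, ih, not_lt.2 hq, not_lt.2 (hr.le.trans hq)]
    · rw [update, if_neg hr]

end Registers

section RautTransitions

variable {n d k p q : ℕ} {s s' : List ℕ} {e : Letter}

theorem Raut_trans_cases (h : (s, e, q, s') ∈ (Raut n d).trans) :
    InAlph n d e ∧ ((q = 1 ∧ s' = update (prio e) s) ∨
      ∃ k, 1 ≤ k ∧ k ≤ rn n ∧ s' = resetReg k (update (prio e) s) ∧
        (q = 2 * k ∧ Even (regVal k (update (prio e) s)) ∨ q = 2 * k + 1)) := by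
  obtain ⟨s₀, e₀, he, h⟩ := h
  rcases h with h | ⟨k, hk1, hk, ⟨hev, h⟩ | ⟨-, h⟩⟩ <;>
    simp only [Prod.mk.injEq] at h <;> obtain ⟨rfl, rfl, rfl, rfl⟩ := h
  · exact ⟨he, Or.inl ⟨rfl, rfl⟩⟩
  · exact ⟨he, Or.inr ⟨k, hk1, hk, rfl, Or.inl ⟨rfl, hev⟩⟩⟩
  · exact ⟨he, Or.inr ⟨k, hk1, hk, rfl, Or.inr rfl⟩⟩

theorem prio_le_of_mem_Raut_trans (h : (s, e, q, s') ∈ (Raut n d).trans) :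
    q ≤ 2 * rn n + 1 := by
  rcases (Raut_trans_cases h).2 with ⟨rfl, -⟩ | ⟨k, -, hk, -, ⟨rfl, -⟩ | rfl⟩ <;> omega

theorem IsRegState.of_mem_Raut_trans (hs : IsRegState n s)
    (h : (s, e, q, s') ∈ (Raut n d).trans) : IsRegState n s' := by
  rcases (Raut_trans_cases h).2 with ⟨-, rfl⟩ | ⟨k, hk1, hk, rfl, -⟩
  · exact isRegState_update hs _
  · exact isRegState_resetReg (isRegState_update hs _) hk1 hk

theorem IsRegState.regVal_of_mem_Raut_trans (hs : IsRegState n s)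
    (h : (s, e, q, s') ∈ (Raut n d).trans) (hk1 : 1 ≤ k) (hk : k ≤ rn n) (hq : q < 2 * k) :
    regVal k s' = max (regVal k s) (prio e) := by
  rw [← hs.regVal_update hk1 hk]
  rcases (Raut_trans_cases h).2 with ⟨-, rfl⟩ | ⟨j, hj1, -, rfl, hj⟩
  · rfl
  · exact regVal_resetReg_of_lt hj1 (by omega)

theorem IsRegState.countP_le_of_mem_Raut_trans (hs : IsRegState n s)
    (h : (s, e, q, s') ∈ (Raut n d).trans) (he : prio e ≤ p) (hp : 1 ≤ p) :
    s'.countP (p < ·) ≤ s.countP (p < ·) := by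
  rw [← countP_update he s]
  rcases (Raut_trans_cases h).2 with ⟨-, rfl⟩ | ⟨k, hk1, hk, rfl, -⟩
  · rfl
  · have := countP_resetReg hk1 ((isRegState_update hs (prio e)).1 ▸ hk) hp
    omega

theorem IsRegState.countP_lt_of_mem_Raut_trans (hs : IsRegState n s)
    (h : (s, e, 2 * k, s') ∈ (Raut n d).trans) (he : prio e ≤ p) (hp : Odd p)
    (hpk : p ≤ max (regVal k s) (prio e)) : s'.countP (p < ·) < s.countP (p < ·) := by
  rcases (Raut_trans_cases h).2 with ⟨h1, -⟩ | ⟨j, hj1, hj, rfl, ⟨hjk, hev⟩ | hjk⟩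
  · omega
  · obtain rfl : j = k := by omega
    rw [hs.regVal_update hj1 hj] at hev
    have hgt : p < max (regVal j s) (prio e) := lt_of_le_of_ne hpk fun hpj =>
      Nat.not_even_iff_odd.2 hp (hpj ▸ hev)
    have := countP_resetReg hj1 ((isRegState_update hs (prio e)).1 ▸ hj) hp.pos
    rw [hs.regVal_update hj1 hj, if_pos hgt, countP_update he s] at this
    omega
  · omega

end RautTransitions

section RautRuns

variable {n d k : ℕ} {s : ℕ → List ℕ} {w : Word} {q : ℕ → ℕ}

theorem prio_le_regVal_of_forall_lt (hinv : ∀ m, IsRegState n (s m))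
    (htr : ∀ m, (s m, w m, q m, s (m + 1)) ∈ (Raut n d).trans) (hk1 : 1 ≤ k) (hk : k ≤ rn n)
    {i t : ℕ} (hit : i < t) (hq : ∀ m, i ≤ m → m < t → q m < 2 * k) :
    prio (w i) ≤ regVal k (s t) := by
  induction t, hit using Nat.le_induction with
  | base =>
    rw [(hinv i).regVal_of_mem_Raut_trans (htr i) hk1 hk (hq i le_rfl i.lt_succ_self)]
    exact le_max_right _ _
  | succ t hit ih =>
    rw [(hinv t).regVal_of_mem_Raut_trans (htr t) hk1 hk (hq t (by omega) t.lt_succ_self)]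
    exact (ih fun m him hmt => hq m him (by omega)).trans (le_max_left _ _)

theorem countP_lt_of_first_reset (hinv : ∀ m, IsRegState n (s m))
    (htr : ∀ m, (s m, w m, q m, s (m + 1)) ∈ (Raut n d).trans) {p i t : ℕ} (hp : Odd p)
    (hpi : prio (w i) = p) (hit : i ≤ t) (hq : ∀ m, i ≤ m → m < t → q m < 2 * k)
    (hqt : q t = 2 * k) (hpt : prio (w t) ≤ p) :
    (s (t + 1)).countP (p < ·) < (s t).countP (p < ·) := by
  have hk : 1 ≤ k ∧ k ≤ rn n := by
    have := (Raut_trans_cases (htr t)).2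
    rw [hqt] at this
    rcases this with ⟨h1, -⟩ | ⟨j, hj1, hj, -, ⟨hjk, -⟩ | hjk⟩ <;> omega
  refine (hinv t).countP_lt_of_mem_Raut_trans (hqt ▸ htr t) hpt hp ?_
  rcases hit.eq_or_lt with rfl | hit
  · exact hpi.ge.trans (le_max_right _ _)
  · exact hpi.ge.trans ((prio_le_regVal_of_forall_lt hinv htr hk.1 hk.2 hit hq).trans
      (le_max_left _ _))

theorem Raut_not_maxInfOftEven_of_limsupOdd (h0 : s 0 = (Raut n d).init)
    (htr : ∀ m, (s m, w m, q m, s (m + 1)) ∈ (Raut n d).trans) (hw : LimsupOdd w) :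
    ¬ MaxInfOftEven q := by
  rintro ⟨_, hev, hQ, hQmax⟩
  obtain ⟨k, rfl⟩ := hev.two_dvd
  obtain ⟨p, hpodd, hp, hpmax⟩ := hw
  have hinv : ∀ m, IsRegState n (s m) := fun m => by
    induction m with
    | zero => exact h0 ▸ isRegState_init
    | succ m ih => exact ih.of_mem_Raut_trans (htr m)
  have hwp : ∀ᶠ m in atTop, prio (w m) ≤ p :=
    eventually_le_of_forall_infOft_le (fun m => (Raut_trans_cases (htr m)).1.2.2.2.1) hpmax
  have hqk : ∀ᶠ m in atTop, q m ≤ 2 * k :=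
    eventually_le_of_forall_infOft_le (fun m => prio_le_of_mem_Raut_trans (htr m)) hQmax
  apply not_frequently_lt_of_eventually_le (g := fun m => (s m).countP (p < ·))
  · filter_upwards [hwp] with m hm
    exact (hinv m).countP_le_of_mem_Raut_trans (htr m) hm hpodd.pos
  rw [frequently_atTop]
  intro T
  obtain ⟨N, hN⟩ := eventually_atTop.1 (hwp.and hqk)
  obtain ⟨i, hi, hpi⟩ := hp (max T N)
  have hreset : ∃ t, i ≤ t ∧ q t = 2 * k := hQ i
  obtain ⟨hit, hqt⟩ := Nat.find_spec hreset
  have hbefore : ∀ m, i ≤ m → m < Nat.find hreset → q m < 2 * k := fun m him hmt =>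
    lt_of_le_of_ne (hN m (by omega)).2 fun hq => Nat.find_min hreset hmt ⟨him, hq⟩
  exact ⟨Nat.find hreset, by omega, countP_lt_of_first_reset hinv htr hpodd hpi hit hbefore hqt
    (hN _ (by omega)).1⟩

end RautRuns

theorem exists_Raut_trans_of_mem_Saut_trans {n d q : ℕ} {x x' : List ℕ × List ℕ} {e : Letter}
    (h : (some x, e, q, some x') ∈ (Saut n d).trans) :
    ∃ p, (x.1, e, p, x'.1) ∈ (Raut n d).trans ∧ CounterStep n p x.2 x'.2 := by
  simp only [Saut, Set.mem_ofPred_eq, Prod.mk.injEq, Option.some.injEq, reduceCtorEq,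
    and_false, exists_false, false_or, or_false] at h
  rcases h with ⟨s, c, e, k, s', -, hR, rfl, rfl, -, rfl⟩ |
    ⟨s, c, e, k, s', hR, hc, rfl, rfl, -, rfl⟩
  · exact ⟨2 * k, hR, Or.inl ⟨k, rfl, rfl⟩⟩
  · exact ⟨2 * k + 1, hR, Or.inr ⟨k, rfl, hc, rfl⟩⟩

theorem IsRun.exists_forall_eq_some {α : Type*} {A : Automaton (Option α)}
    {ρ : ℕ → Trans (Option α)} (hρ : IsRun A ρ) (hinit : A.init ≠ none)
    (h : ∀ k, tTgt (ρ k) ≠ none) :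
    ∃ st : ℕ → α, ∀ k, tSrc (ρ k) = some (st k) ∧ tTgt (ρ k) = some (st (k + 1)) := by
  have hsrc : ∀ k, tSrc (ρ k) ≠ none
    | 0 => hρ.1 ▸ hinit
    | k + 1 => (hρ.2 k).2 ▸ h k
  choose st hst using fun k => Option.ne_none_iff_exists'.1 (hsrc k)
  exact ⟨st, fun k => ⟨hst k, (hρ.2 k).2.trans (hst (k + 1))⟩⟩

theorem Saut_rejects_limsupOdd_general (n d : ℕ)
    (w : Word) (hodd : LimsupOdd w)
    (ρ : ℕ → Trans SState) (hρ : IsRun (Saut n d) ρ) (hr : Reads ρ w) :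
    ∃ k, tTgt (ρ k) = none := by
  by_contra! hrej
  obtain ⟨st, hst⟩ := hρ.exists_forall_eq_some (Option.some_ne_none _) hrej
  have hstep (k : ℕ) : ∃ p, ((st k).1, w k, p, (st (k + 1)).1) ∈ (Raut n d).trans ∧
      CounterStep n p (st k).2 (st (k + 1)).2 := by
    apply exists_Raut_trans_of_mem_Saut_trans (q := tPrio (ρ k))
    rw [← (hst k).1, ← (hst k).2, ← hr k]
    exact (hρ.2 k).1
  choose p hR hC using hstep
  have h0 : (st 0).1 = (Raut n d).init := by
    have h := (hst 0).1.symm.trans hρ.1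
    simp only [Saut, Option.some.injEq] at h
    rw [h]
    rfl
  exact Raut_not_maxInfOftEven_of_limsupOdd h0 hR hodd
    (maxInfOftEven_of_counterStep (fun k => prio_le_of_mem_Raut_trans (hR k)) hC)

/-- `S_{n,d}` rejects all words of `LimsupOdd_{n,d}`: every run
reading such a word eventually reaches the rejecting state `rej` (= `none`). -/
theorem Saut_rejects_limsupOdd (n d : ℕ) (hn : 1 ≤ n) (hd : 0 < d) (hde : Even d)
    (w : Word) (hw : ∀ k, InAlph n d (w k)) (hodd : LimsupOdd w)
    (ρ : ℕ → Trans SState) (hρ : IsRun (Saut n d) ρ) (hr : Reads ρ w) :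
    ∃ k, tTgt (ρ k) = none :=
  Saut_rejects_limsupOdd_general n d w hodd ρ hρ hr

end PGSep
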